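/- The min-sum objective is weight-separable: let (X, d) be a finite set with a distance function d, let k satisfy 1 < k < |X|, and let S ⊆ X with 2 ≤ |S| ≤ k. Then there exists a weight function w on X such that every k-clustering C of X minimizing the min-sum cost with respect to (w[X], d) places all elements of S in pairwise distinct clusters. -/

import Mathlib

/-!
Give every point of `S` a large weight `M` and every other point weight `1`. A clustering that
separates `S` pays at most `M` times the total distance, while a clustering with two points
`x ≠ y` of `S` in one cluster pays at least `d x y * M ^ 2`; for `M` large the second always
exceeds the first. Separating `k`-clusterings exist because `S` extends to a set `T` of exactly
`k` points, and the fibres of a retraction of `X` onto `T` form a `k`-clustering.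
-/

open Finset

/-- A weight function assigns a positive real weight to every point. -/
def IsWeight {X : Type*} (w : X → ℝ) : Prop := ∀ x, 0 < w x

/-- A k-clustering: a partition of `X` into `k` pairwise disjoint nonempty parts. -/
def IsClustering {X : Type*} [Fintype X] [DecidableEq X]
    (C : Finset (Finset X)) (k : ℕ) : Prop :=
  C.card = k ∧ (∀ A ∈ C, A.Nonempty) ∧
  (∀ A ∈ C, ∀ B ∈ C, A ≠ B → Disjoint A B) ∧
  (∀ x : X, ∃ A ∈ C, x ∈ A)

/-- `x ∼_C y`: `x` and `y` lie in the same cluster of `C`. -/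
def SameCluster {X : Type*} [DecidableEq X] (C : Finset (Finset X)) (x y : X) : Prop :=
  ∃ A ∈ C, x ∈ A ∧ y ∈ A

/-- The k-means cost of a clustering `C` of weighted data `(w[X], d)`: for each cluster, the
sum over unordered pairs of distinct points of `d(x,y)² w(x) w(y)` (written as half the sum
over ordered pairs of distinct points), divided by the cluster weight. -/
noncomputable def kmeansCost {X : Type*} [DecidableEq X]
    (C : Finset (Finset X)) (w : X → ℝ) (d : X → X → ℝ) : ℝ :=
  ∑ A ∈ C, ((1 / 2) * ∑ p ∈ A.offDiag, d p.1 p.2 ^ 2 * w p.1 * w p.2) / (∑ x ∈ A, w x)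

/-- The min-sum cost of a clustering `C` of weighted data `(w[X], d)`: the sum over clusters
of the sum over unordered pairs of distinct points of `d(x,y) w(x) w(y)`. -/
noncomputable def minSumCost {X : Type*} [DecidableEq X]
    (C : Finset (Finset X)) (w : X → ℝ) (d : X → X → ℝ) : ℝ :=
  ∑ A ∈ C, (1 / 2) * ∑ p ∈ A.offDiag, d p.1 p.2 * w p.1 * w p.2

lemma Finset.exists_pos_forall_le {α : Type*} {s : Finset α} {f : α → ℝ}
    (hf : ∀ a ∈ s, 0 < f a) : ∃ δ > 0, ∀ a ∈ s, δ ≤ f a := by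
  rcases s.eq_empty_or_nonempty with rfl | hs
  · exact ⟨1, one_pos, by simp⟩
  · obtain ⟨a, ha, hmin⟩ := s.exists_min_image f hs
    exact ⟨f a, hf a ha, hmin⟩

section Clustering

variable {X : Type*} [DecidableEq X]

section Fibres

variable [Fintype X] {Y : Type*} [DecidableEq Y]

def fibreClustering (f : X → Y) (T : Finset Y) : Finset (Finset X) :=
  T.image fun t => univ.filter (f · = t)

lemma isClustering_fibreClustering {f : X → Y} {T : Finset Y} (hmaps : ∀ x, f x ∈ T)
    (hsurj : ∀ t ∈ T, ∃ x, f x = t) : IsClustering (fibreClustering f T) T.card := by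
  have hinj : Set.InjOn (fun t => univ.filter (f · = t)) T := by
    intro s hs t _ hst
    obtain ⟨x, rfl⟩ := hsurj s hs
    have hx : x ∈ univ.filter (f · = f x) := by simp
    simpa [hst] using hx
  refine ⟨card_image_of_injOn hinj, ?_, ?_, fun x => ⟨_, mem_image_of_mem _ (hmaps x), by simp⟩⟩
  · simp only [fibreClustering, forall_mem_image]
    intro t ht
    obtain ⟨x, hx⟩ := hsurj t ht
    exact ⟨x, by simp [hx]⟩
  · simp only [fibreClustering, forall_mem_image]
    intro s _ t _ hst
    exact disjoint_filter.2 fun x _ hs ht => hst (by rw [← hs, ← ht])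

lemma SameCluster.fibreClustering {f : X → Y} {T : Finset Y} {x y : X}
    (h : SameCluster (fibreClustering f T) x y) : f x = f y := by
  obtain ⟨A, hA, hx, hy⟩ := h
  obtain ⟨t, -, rfl⟩ := mem_image.1 hA
  rw [(mem_filter.1 hx).2, (mem_filter.1 hy).2]

end Fibres

lemma exists_isClustering_not_sameCluster [Fintype X] {S : Finset X} {k : ℕ} (hk : 0 < k)
    (hSk : S.card ≤ k) (hkX : k ≤ Fintype.card X) :
    ∃ C, IsClustering C k ∧ ∀ x ∈ S, ∀ y ∈ S, x ≠ y → ¬ SameCluster C x y := by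
  obtain ⟨T, hST, rfl⟩ := exists_superset_card_eq hSk hkX
  obtain ⟨t₀, ht₀⟩ := card_pos.1 hk
  let retract : X → X := fun x => if x ∈ T then x else t₀
  refine ⟨fibreClustering retract T, isClustering_fibreClustering ?_ ?_, ?_⟩
  · intro x
    by_cases hx : x ∈ T <;> simp [retract, hx, ht₀]
  · exact fun t ht => ⟨t, if_pos ht⟩
  · intro x hx y hy hxy hsame
    have h := hsame.fibreClustering
    simp only [retract, if_pos (hST hx), if_pos (hST hy)] at h
    exact hxy h

lemma sum_sum_offDiag_le_sum [Fintype X] {C : Finset (Finset X)}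
    (hdisj : ∀ A ∈ C, ∀ B ∈ C, A ≠ B → Disjoint A B) {f : X × X → ℝ} (hf : ∀ p, 0 ≤ f p) :
    ∑ A ∈ C, ∑ p ∈ A.offDiag, f p ≤ ∑ p, f p := by
  rw [← sum_biUnion]
  · exact sum_le_univ_sum_of_nonneg hf
  · intro A hA B hB hAB
    exact disjoint_left.2 fun p hpA hpB =>
      disjoint_left.1 (hdisj A hA B hB hAB) (mem_offDiag.1 hpA).1 (mem_offDiag.1 hpB).1

section Cost

variable {d : X → X → ℝ} {w : X → ℝ} {C : Finset (Finset X)}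

lemma mul_mul_le_minSumCost (hsym : ∀ x y, d x y = d y x) (hnn : ∀ x y, 0 ≤ d x y)
    (hw : ∀ x, 0 ≤ w x) {x y : X} (hxy : x ≠ y) (h : SameCluster C x y) :
    d x y * w x * w y ≤ minSumCost C w d := by
  obtain ⟨A, hA, hxA, hyA⟩ := h
  have hterm : ∀ p : X × X, 0 ≤ d p.1 p.2 * w p.1 * w p.2 := fun p =>
    mul_nonneg (mul_nonneg (hnn _ _) (hw _)) (hw _)
  have hpair : ∑ p ∈ {(x, y), (y, x)}, d p.1 p.2 * w p.1 * w p.2 ≤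
      ∑ p ∈ A.offDiag, d p.1 p.2 * w p.1 * w p.2 := by
    refine sum_le_sum_of_subset_of_nonneg ?_ fun p _ _ => hterm p
    simp [insert_subset_iff, hxA, hyA, hxy, hxy.symm]
  rw [sum_pair (by simp [hxy])] at hpair
  have hcluster : (1 / 2) * ∑ p ∈ A.offDiag, d p.1 p.2 * w p.1 * w p.2 ≤ minSumCost C w d :=
    single_le_sum (f := fun A => (1 / 2) * ∑ p ∈ A.offDiag, d p.1 p.2 * w p.1 * w p.2)
      (fun B _ => mul_nonneg (by norm_num) (sum_nonneg fun p _ => hterm p)) hA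
  rw [hsym y x] at hpair
  linarith

lemma minSumCost_le_of_not_sameCluster [Fintype X] {S : Finset X} {M : ℝ} (hM : 1 ≤ M)
    (hnn : ∀ x y, 0 ≤ d x y) (hdisj : ∀ A ∈ C, ∀ B ∈ C, A ≠ B → Disjoint A B)
    (hsep : ∀ x ∈ S, ∀ y ∈ S, x ≠ y → ¬ SameCluster C x y) :
    minSumCost C (fun x => if x ∈ S then M else 1) d ≤ M / 2 * ∑ p : X × X, d p.1 p.2 := by
  set w : X → ℝ := fun x => if x ∈ S then M else 1
  have hw : ∀ A ∈ C, ∀ p ∈ A.offDiag, w p.1 * w p.2 ≤ M := by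
    intro A hA p hp
    obtain ⟨h₁, h₂, h₁₂⟩ := mem_offDiag.1 hp
    by_cases hp₁ : p.1 ∈ S <;> by_cases hp₂ : p.2 ∈ S
    · exact absurd ⟨A, hA, h₁, h₂⟩ (hsep _ hp₁ _ hp₂ h₁₂)
    all_goals simp [w, hp₁, hp₂, hM]
  calc minSumCost C w d
      = 1 / 2 * ∑ A ∈ C, ∑ p ∈ A.offDiag, d p.1 p.2 * w p.1 * w p.2 := by
        rw [minSumCost, mul_sum]
    _ ≤ 1 / 2 * ∑ A ∈ C, ∑ p ∈ A.offDiag, M * d p.1 p.2 := by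
        refine mul_le_mul_of_nonneg_left (sum_le_sum fun A hA => sum_le_sum fun p hp => ?_)
          (by norm_num)
        rw [mul_assoc, mul_comm M]
        exact mul_le_mul_of_nonneg_left (hw A hA p hp) (hnn _ _)
    _ ≤ 1 / 2 * ∑ p : X × X, M * d p.1 p.2 := by
        gcongr
        exact sum_sum_offDiag_le_sum hdisj fun p => mul_nonneg (by linarith) (hnn _ _)
    _ = M / 2 * ∑ p : X × X, d p.1 p.2 := by
        rw [← mul_sum]
        ring

end Cost

end Clustering

theorem minSum_weight_separable_general
    {X : Type*} [Fintype X] [DecidableEq X]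
    (d : X → X → ℝ) (hsym : ∀ x y, d x y = d y x) (hnn : ∀ x y, 0 ≤ d x y)
    (hzero : ∀ x y, d x y = 0 ↔ x = y)
    (k : ℕ) (hk1 : 1 < k) (hk2 : k < Fintype.card X)
    (S : Finset X) (hS2 : S.card ≤ k) :
    ∃ w : X → ℝ, IsWeight w ∧
      ∀ C : Finset (Finset X), IsClustering C k →
        (∀ C' : Finset (Finset X), IsClustering C' k →
          minSumCost C w d ≤ minSumCost C' w d) →
        ∀ x ∈ S, ∀ y ∈ S, x ≠ y → ¬ SameCluster C x y := by
  set D := ∑ p : X × X, d p.1 p.2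
  have hD : 0 ≤ D := sum_nonneg fun p _ => hnn p.1 p.2
  obtain ⟨δ, hδ, hδle⟩ := exists_pos_forall_le (s := S.offDiag) (f := fun p => d p.1 p.2)
    fun p hp => (hnn _ _).lt_of_ne' fun h => (mem_offDiag.1 hp).2.2 ((hzero _ _).1 h)
  set M := 1 + D / δ
  have hM : 1 ≤ M := le_add_of_nonneg_right (div_nonneg hD hδ.le)
  have hδM : δ * M = δ + D := by rw [mul_add, mul_div_cancel₀ _ hδ.ne', mul_one]
  set w : X → ℝ := fun x => if x ∈ S then M else 1
  have hw : ∀ x, 1 ≤ w x := fun x => by dsimp only [w]; split_ifs <;> linarith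
  refine ⟨w, fun x => one_pos.trans_le (hw x), ?_⟩
  rintro C - hopt x hx y hy hxy hsame
  obtain ⟨C₀, hC₀, hsep⟩ := exists_isClustering_not_sameCluster (by omega) hS2 hk2.le
  have hlow := mul_mul_le_minSumCost hsym hnn (fun z => zero_le_one.trans (hw z)) hxy hsame
  have hup := minSumCost_le_of_not_sameCluster hM hnn hC₀.2.2.1 hsep
  have hcmp := hopt C₀ hC₀
  have hdxy : δ ≤ d x y := hδle (x, y) (mem_offDiag.2 ⟨hx, hy, hxy⟩)
  simp only [w, if_pos hx, if_pos hy] at hlow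
  -- `d x y * M ^ 2 ≥ δ * M ^ 2 = (δ + D) * M > D * M / 2`
  nlinarith [mul_le_mul_of_nonneg_right hdxy (by positivity : (0 : ℝ) ≤ M * M)]

/-- the min-sum objective is weight-separable: for any `S ⊆ X` with
`2 ≤ |S| ≤ k` there is a weight function such that every k-clustering minimizing the
min-sum cost places all elements of `S` in pairwise distinct clusters. -/
theorem minSum_weight_separable
    {X : Type*} [Fintype X] [DecidableEq X]
    (d : X → X → ℝ) (hsym : ∀ x y, d x y = d y x) (hnn : ∀ x y, 0 ≤ d x y)
    (hzero : ∀ x y, d x y = 0 ↔ x = y)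
    (k : ℕ) (hk1 : 1 < k) (hk2 : k < Fintype.card X)
    (S : Finset X) (hS1 : 2 ≤ S.card) (hS2 : S.card ≤ k) :
    ∃ w : X → ℝ, IsWeight w ∧
      ∀ C : Finset (Finset X), IsClustering C k →
        (∀ C' : Finset (Finset X), IsClustering C' k →
          minSumCost C w d ≤ minSumCost C' w d) →
        ∀ x ∈ S, ∀ y ∈ S, x ≠ y → ¬ SameCluster C x y :=
  minSum_weight_separable_general d hsym hnn hzero k hk1 hk2 S hS2
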